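/- Let G be a null semigroup: a semigroup with an element θ such that x*y = θ for all x, y ∈ G. Then a partition 𝒮 of G into nonempty finite blocks is a Schur ring over G if and only if {θ} is a block of 𝒮. Consequently, the map 𝒮 ↦ 𝒮 \ {{θ}} is a bijection from the set of Schur rings over G to the set of partitions of G \ {θ} into nonempty finite blocks. -/

import Mathlib

open scoped Pointwise

/-- The simple quantity `[X] = ∑_{x ∈ X} x` in the semigroup algebra `MonoidAlgebra ℚ G`. -/
noncomputable def simpleQty {G : Type*} [Mul G] (X : Finset G) : MonoidAlgebra ℚ G :=
  ∑ x ∈ X, MonoidAlgebra.single x (1 : ℚ)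

open scoped Classical

lemma simpleQty_apply {G : Type*} [Mul G] (F : Finset G) (g : G) :
    (simpleQty F).coeff g = if g ∈ F then 1 else 0 := by
  unfold simpleQty
  rw [MonoidAlgebra.coeff_sum, Finsupp.finset_sum_apply]
  simp [MonoidAlgebra.coeff_single, Finsupp.single_apply]

lemma simpleQty_mul {G : Type*} [Semigroup G] (θ : G) (hθ : ∀ x y : G, x * y = θ)
    (A B : Finset G) :
    simpleQty A * simpleQty B = ((A.card * B.card : ℚ)) • MonoidAlgebra.single θ (1:ℚ) := by
  unfold simpleQty
  rw [Finset.sum_mul_sum]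
  simp only [MonoidAlgebra.single_mul_single, hθ, mul_one, Finset.sum_const,
    ← Nat.cast_smul_eq_nsmul ℚ, smul_smul, Nat.cast_mul]

/-- A partition of `G` into nonempty finite blocks. -/
def IsPartition {G : Type*} (S : Set (Set G)) : Prop :=
  (∀ X ∈ S, X.Nonempty ∧ X.Finite) ∧ ∀ x : G, ∃! X, X ∈ S ∧ x ∈ X

/-- The ℚ-linear span of the simple quantities of the blocks of `S`. -/
noncomputable def schurSpan {G : Type*} [Mul G] (S : Set (Set G)) :
    Submodule ℚ (MonoidAlgebra ℚ G) :=
  Submodule.span ℚ { z | ∃ X ∈ S, ∃ hX : X.Finite, z = simpleQty hX.toFinset }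

lemma schurSpan_const {G : Type*} [Mul G] {S : Set (Set G)} (hS : IsPartition S)
    {v : MonoidAlgebra ℚ G} (hv : v ∈ schurSpan S) :
    ∀ X ∈ S, ∀ x ∈ X, ∀ y ∈ X, v.coeff x = v.coeff y := by
  induction hv using Submodule.span_induction with
  | mem z hz =>
    obtain ⟨Y, hY, hYf, rfl⟩ := hz
    intro X hX x hx y hy
    rw [simpleQty_apply, simpleQty_apply]
    have hiff : x ∈ Y ↔ y ∈ Y := by
      constructor
      · intro hxY
        have := (hS.2 x).unique ⟨hX, hx⟩ ⟨hY, hxY⟩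
        subst this; exact hy
      · intro hyY
        have := (hS.2 y).unique ⟨hX, hy⟩ ⟨hY, hyY⟩
        subst this; exact hx
    simp [Set.Finite.mem_toFinset, hiff]
  | zero => intro X hX x hx y hy; simp
  | add u w _ _ hu hw =>
    intro X hX x hx y hy
    show (u + w).coeff x = (u + w).coeff y
    rw [MonoidAlgebra.coeff_add, Finsupp.add_apply, Finsupp.add_apply, hu X hX x hx y hy, hw X hX x hx y hy]
  | smul c u _ hu =>
    intro X hX x hx y hy
    show (c • u).coeff x = (c • u).coeff y
    rw [MonoidAlgebra.coeff_smul_apply, MonoidAlgebra.coeff_smul_apply, hu X hX x hx y hy]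

lemma single_mem_span_iff {G : Type*} [Mul G] {S : Set (Set G)} (hS : IsPartition S) (θ : G) :
    MonoidAlgebra.single θ (1:ℚ) ∈ schurSpan S ↔ ({θ} : Set G) ∈ S := by
  constructor
  · intro h
    obtain ⟨X, ⟨⟨hXS, hθX⟩, -⟩⟩ := hS.2 θ
    have hX1 : X = {θ} := by
      apply Set.eq_singleton_iff_unique_mem.2 ⟨hθX, ?_⟩
      intro x hx
      have h2 := schurSpan_const hS h X hXS x hx θ hθX
      rw [MonoidAlgebra.coeff_single, Finsupp.single_apply, Finsupp.single_apply, if_pos rfl] at h2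
      by_contra hne
      rw [if_neg (fun h' : θ = x => hne h'.symm)] at h2
      exact one_ne_zero h2.symm
    rw [← hX1]; exact hXS
  · intro h
    apply Submodule.subset_span
    refine ⟨{θ}, h, Set.finite_singleton θ, ?_⟩
    have : (Set.finite_singleton θ).toFinset = {θ} := by ext; simp
    rw [this]
    unfold simpleQty
    simp

/-- A Schur ring over the semigroup `G`. -/
def IsSchurRing {G : Type*} [Semigroup G] (S : Set (Set G)) : Prop :=
  IsPartition S ∧ ∀ X ∈ S, ∀ Y ∈ S, ∀ (hX : X.Finite) (hY : Y.Finite),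
    simpleQty hX.toFinset * simpleQty hY.toFinset ∈ schurSpan S

/-- `A` is an `S`-subset: a union of blocks of `S`. -/
def IsSUnion {G : Type*} (S : Set (Set G)) (A : Set G) : Prop :=
  ∀ X ∈ S, X ⊆ A ∨ X ∩ A = ∅

/-- A partition of the subset `A` of `G` into nonempty finite blocks. -/
def IsPartitionOn {G : Type*} (A : Set G) (T : Set (Set G)) : Prop :=
  (∀ X ∈ T, X.Nonempty ∧ X.Finite ∧ X ⊆ A) ∧ ∀ a ∈ A, ∃! X, X ∈ T ∧ a ∈ X

/-- over a null semigroup (all products equal `θ`), a partition is a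
Schur ring iff `{θ}` is a block; consequently `S ↦ S \ {{θ}}` is a bijection from
Schur rings over `G` to partitions of `G \ {θ}`. -/
theorem null_semigroup_schur {G : Type*} [Semigroup G] (θ : G)
    (hθ : ∀ x y : G, x * y = θ) :
    (∀ S : Set (Set G), IsPartition S → (IsSchurRing S ↔ ({θ} : Set G) ∈ S)) ∧
    Set.BijOn (fun S : Set (Set G) => S \ {({θ} : Set G)})
      {S : Set (Set G) | IsSchurRing S}
      {T : Set (Set G) | IsPartitionOn ({θ}ᶜ : Set G) T} := by
  have hmain : ∀ S : Set (Set G), IsPartition S → (IsSchurRing S ↔ ({θ} : Set G) ∈ S) := by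
    intro S hP
    constructor
    · rintro ⟨-, hprod⟩
      obtain ⟨X, ⟨⟨hXS, hθX⟩, -⟩⟩ := hP.2 θ
      obtain ⟨hXne, hXf⟩ := hP.1 X hXS
      have h := hprod X hXS X hXS hXf hXf
      rw [simpleQty_mul θ hθ] at h
      have hc : ((hXf.toFinset.card : ℚ) * hXf.toFinset.card) ≠ 0 := by
        have : 0 < hXf.toFinset.card := Finset.card_pos.2 (hXf.toFinset_nonempty.2 hXne)
        positivity
      exact (single_mem_span_iff hP θ).1 ((Submodule.smul_mem_iff _ hc).1 h)
    · intro h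
      refine ⟨hP, fun X hX Y hY hXf hYf => ?_⟩
      rw [simpleQty_mul θ hθ]
      exact Submodule.smul_mem _ _ ((single_mem_span_iff hP θ).2 h)
  refine ⟨hmain, ?_, ?_, ?_⟩
  · -- MapsTo
    rintro S hS
    simp only [Set.mem_setOf_eq] at hS ⊢
    have hθS : ({θ} : Set G) ∈ S := (hmain S hS.1).1 hS
    constructor
    · rintro X ⟨hXS, hXne⟩
      obtain ⟨hne, hfin⟩ := hS.1.1 X hXS
      refine ⟨hne, hfin, ?_⟩
      intro x hx
      simp only [Set.mem_compl_iff, Set.mem_singleton_iff]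
      intro hxθ
      subst hxθ
      exact hXne ((hS.1.2 x).unique ⟨hXS, hx⟩ ⟨hθS, rfl⟩)
    · intro a ha
      obtain ⟨X, ⟨hXS, haX⟩, huniq⟩ := hS.1.2 a
      have hXne : X ≠ ({θ} : Set G) := by
        rintro rfl
        exact ha haX
      exact ⟨X, ⟨⟨hXS, hXne⟩, haX⟩, fun Y ⟨⟨hYS, _⟩, haY⟩ => huniq Y ⟨hYS, haY⟩⟩
  · -- InjOn
    rintro S₁ hS₁ S₂ hS₂ heq
    simp only [Set.mem_setOf_eq] at hS₁ hS₂
    have h₁ : ({θ} : Set G) ∈ S₁ := (hmain S₁ hS₁.1).1 hS₁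
    have h₂ : ({θ} : Set G) ∈ S₂ := (hmain S₂ hS₂.1).1 hS₂
    have e₁ : S₁ \ {({θ} : Set G)} ∪ {({θ} : Set G)} = S₁ :=
      Set.diff_union_of_subset (Set.singleton_subset_iff.2 h₁)
    have e₂ : S₂ \ {({θ} : Set G)} ∪ {({θ} : Set G)} = S₂ :=
      Set.diff_union_of_subset (Set.singleton_subset_iff.2 h₂)
    rw [← e₁, ← e₂]
    simp only at heq
    rw [heq]
  · -- SurjOn
    rintro T hT
    simp only [Set.mem_setOf_eq] at hT
    have hθT : ({θ} : Set G) ∉ T := by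
      intro h
      exact (hT.1 _ h).2.2 rfl rfl
    have hpart : IsPartition (insert ({θ} : Set G) T) := by
      constructor
      · rintro X (rfl | hX)
        · exact ⟨⟨θ, rfl⟩, Set.finite_singleton θ⟩
        · exact ⟨(hT.1 X hX).1, (hT.1 X hX).2.1⟩
      · intro x
        by_cases hx : x = θ
        · subst hx
          refine ⟨{x}, ⟨Set.mem_insert _ _, rfl⟩, ?_⟩
          rintro Y ⟨(rfl | hY), hxY⟩
          · rfl
          · exact absurd rfl ((hT.1 Y hY).2.2 hxY)
        · obtain ⟨X, ⟨hXT, hxX⟩, huniq⟩ := hT.2 x hx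
          refine ⟨X, ⟨Set.mem_insert_of_mem _ hXT, hxX⟩, ?_⟩
          rintro Y ⟨(rfl | hY), hxY⟩
          · exact absurd hxY hx
          · exact huniq Y ⟨hY, hxY⟩
    refine ⟨insert ({θ} : Set G) T, ?_, ?_⟩
    · simp only [Set.mem_setOf_eq]
      exact (hmain _ hpart).2 (Set.mem_insert _ _)
    · simp only
      exact Set.insert_diff_self_of_notMem hθT
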